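/- arXiv:1807.00929 — 6 statements merged into one kernel-verified Lean document; each statement's English description precedes it below -/
import Mathlib

section
/- Let A be a real symmetric n×n matrix and v ∈ ℝⁿ. Then the eigenvalues of A interlace the eigenvalues of A + vvᵀ; that is, if α₁ ≥ ... ≥ αₙ are the eigenvalues of A + vvᵀ and β₁ ≥ ... ≥ βₙ are the eigenvalues of A, then α₁ ≥ β₁ ≥ α₂ ≥ ... ≥ βₙ₋₁ ≥ αₙ ≥ βₙ. -/
/-!
Both inequalities are Courant–Fischer comparisons. A nonzero `x` in the span of the top `i + 1`
eigenvectors of `A` and the bottom `n - i` eigenvectors of `A + vvᵀ` exists by counting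
dimensions, and for it `βᵢ ‖x‖² ≤ ⟪x, A x⟫ ≤ ⟪x, (A + vvᵀ) x⟫ ≤ αᵢ ‖x‖²`. For `αᵢ₊₁ ≤ βᵢ` the roles
of the two matrices swap, and `x` is taken in the span of the top `i + 2` eigenvectors of
`A + vvᵀ`, the bottom `n - i` eigenvectors of `A` and the hyperplane `v⊥`, on which the two
quadratic forms agree; these three subspaces have total dimension at least `2n + 1`.
-/

open Finset Matrix Module Submodule
open scoped InnerProductSpace RealInnerProductSpace

section FiniteDimensional

variable {K V : Type*} [DivisionRing K] [AddCommGroup V] [Module K V] [FiniteDimensional K V]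

theorem Submodule.finrank_add_finrank_le_finrank_add_finrank_inf (s t : Submodule K V) :
    finrank K s + finrank K t ≤ finrank K V + finrank K ↥(s ⊓ t) := by
  rw [← finrank_sup_add_finrank_inf_eq]
  gcongr
  exact Submodule.finrank_le _

theorem Submodule.exists_mem_inf_ne_zero_of_finrank_lt {s t : Submodule K V}
    (h : finrank K V < finrank K s + finrank K t) : ∃ x ∈ s ⊓ t, x ≠ 0 := by
  refine exists_mem_ne_zero_of_ne_bot fun hst => ?_
  have := finrank_add_finrank_le_finrank_add_finrank_inf s t
  rw [hst, finrank_bot] at this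
  omega

theorem Submodule.finrank_le_finrank_orthogonal_span_singleton_add_one {𝕜 E : Type*} [RCLike 𝕜]
    [NormedAddCommGroup E] [InnerProductSpace 𝕜 E] [FiniteDimensional 𝕜 E] (u : E) :
    finrank 𝕜 E ≤ finrank 𝕜 (𝕜 ∙ u)ᗮ + 1 := by
  have hsum := (𝕜 ∙ u).finrank_add_finrank_orthogonal
  have hline := finrank_span_le_card (R := 𝕜) ({u} : Set E)
  rw [Set.toFinset_singleton, card_singleton] at hline
  omega

end FiniteDimensional

namespace OrthonormalBasis

variable {ι : Type*} [Fintype ι]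

section RCLike

variable {𝕜 E : Type*} [RCLike 𝕜] [NormedAddCommGroup E] [InnerProductSpace 𝕜 E]

theorem finrank_span_image (b : OrthonormalBasis ι 𝕜 E) (S : Finset ι) :
    finrank 𝕜 (span 𝕜 (b '' S)) = #S := by
  rw [Set.image_eq_range]
  exact (finrank_span_eq_card
    (b.orthonormal.linearIndependent.comp ((↑) : S → ι) Subtype.val_injective)).trans (by simp)

theorem inner_eq_zero_of_mem_span_image (b : OrthonormalBasis ι 𝕜 E) {S : Set ι} {x : E}
    (hx : x ∈ span 𝕜 (b '' S)) {j : ι} (hj : j ∉ S) : ⟪b j, x⟫_𝕜 = 0 := by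
  rw [← b.coe_toBasis, Basis.mem_span_image] at hx
  rw [← b.repr_apply_apply, ← b.coe_toBasis_repr_apply]
  exact Finsupp.notMem_support_iff.mp fun h => hj (hx h)

end RCLike

variable {E : Type*} [NormedAddCommGroup E] [InnerProductSpace ℝ E]
  (b : OrthonormalBasis ι ℝ E) {T : E →ₗ[ℝ] E} {μ : ι → ℝ}

theorem inner_map_self_eq_sum (hT : ∀ j, T (b j) = μ j • b j) (x : E) :
    ⟪x, T x⟫ = ∑ j, μ j * ⟪b j, x⟫ ^ 2 := by
  have hTx : T x = ∑ j, (μ j * ⟪b j, x⟫) • b j := by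
    conv_lhs => rw [← b.sum_repr' x]
    simp only [map_sum, map_smul, hT, smul_smul, mul_comm]
  simp only [hTx, inner_sum, inner_smul_right, real_inner_comm x, sq, mul_assoc]

theorem mul_norm_sq_le_inner_map_self (hT : ∀ j, T (b j) = μ j • b j) {S : Set ι} {c : ℝ}
    (hc : ∀ j ∈ S, c ≤ μ j) {x : E} (hx : x ∈ span ℝ (b '' S)) :
    c * ‖x‖ ^ 2 ≤ ⟪x, T x⟫ := by
  rw [b.inner_map_self_eq_sum hT, ← b.sum_sq_inner_right, mul_sum]
  refine sum_le_sum fun j _ => ?_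
  by_cases hj : j ∈ S
  · exact mul_le_mul_of_nonneg_right (hc j hj) (sq_nonneg _)
  · simp [b.inner_eq_zero_of_mem_span_image hx hj]

theorem inner_map_self_le_mul_norm_sq (hT : ∀ j, T (b j) = μ j • b j) {S : Set ι} {c : ℝ}
    (hc : ∀ j ∈ S, μ j ≤ c) {x : E} (hx : x ∈ span ℝ (b '' S)) :
    ⟪x, T x⟫ ≤ c * ‖x‖ ^ 2 := by
  have := b.mul_norm_sq_le_inner_map_self (T := -T) (μ := -μ) (c := -c)
    (fun j => by simp [hT]) (fun j hj => neg_le_neg (hc j hj)) hx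
  simpa using this

end OrthonormalBasis

section Comparison

variable {E : Type*} [NormedAddCommGroup E] [InnerProductSpace ℝ E] {n : ℕ}

theorem eigenvalue_le_eigenvalue_of_inner_map_self_le {T T' : E →ₗ[ℝ] E} {b b' : OrthonormalBasis (Fin n) ℝ E}
    {β α : Fin n → ℝ} (hβ : Antitone β) (hα : Antitone α) (hT : ∀ j, T (b j) = β j • b j)
    (hT' : ∀ j, T' (b' j) = α j • b' j) (W : Submodule ℝ E)
    (hW : ∀ x ∈ W, ⟪x, T x⟫ ≤ ⟪x, T' x⟫) {i j : Fin n}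
    (hdim : 2 * n < (i + 1) + (n - j) + finrank ℝ W) : β i ≤ α j := by
  have := b.toBasis.finiteDimensional_of_finite
  have hE : finrank ℝ E = n := by simpa using finrank_eq_card_basis b.toBasis
  set V := span ℝ (b '' ↑(Iic i))
  set U := span ℝ (b' '' ↑(Ici j))
  have hV : finrank ℝ V = i + 1 := by rw [b.finrank_span_image, Fin.card_Iic]
  have hU : finrank ℝ U = n - j := by rw [b'.finrank_span_image, Fin.card_Ici]
  have hVW := finrank_add_finrank_le_finrank_add_finrank_inf V W
  obtain ⟨x, ⟨⟨hxV, hxW⟩, hxU⟩, hx0⟩ :=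
    exists_mem_inf_ne_zero_of_finrank_lt (s := V ⊓ W) (t := U) (by omega)
  have hlow : β i * ‖x‖ ^ 2 ≤ ⟪x, T x⟫ :=
    b.mul_norm_sq_le_inner_map_self hT (fun k hk => hβ (mem_Iic.mp hk)) hxV
  have hup : ⟪x, T' x⟫ ≤ α j * ‖x‖ ^ 2 :=
    b'.inner_map_self_le_mul_norm_sq hT' (fun k hk => hα (mem_Ici.mp hk)) hxU
  exact le_of_mul_le_mul_right (hlow.trans ((hW x hxW).trans hup)) (by positivity)

end Comparison

namespace Matrix

variable {ι : Type*} [Fintype ι] [DecidableEq ι]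

theorem IsHermitian.toEuclideanLin_eigenvectorBasis_reindex {M : Matrix ι ι ℝ}
    (hM : M.IsHermitian) (σ : Equiv.Perm ι) (j : ι) :
    toEuclideanLin M (hM.eigenvectorBasis.reindex σ.symm j) =
      (hM.eigenvalues ∘ σ) j • hM.eigenvectorBasis.reindex σ.symm j := by
  simp only [OrthonormalBasis.reindex_apply, Equiv.symm_symm, Function.comp_apply]
  exact congrArg (WithLp.toLp 2) (hM.mulVec_eigenvectorBasis (σ j))

theorem inner_toEuclideanLin_add_vecMulVec_self (M : Matrix ι ι ℝ) (v : ι → ℝ)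
    (x : EuclideanSpace ℝ ι) :
    ⟪x, toEuclideanLin (M + vecMulVec v v) x⟫ =
      ⟪x, toEuclideanLin M x⟫ + ⟪WithLp.toLp 2 v, x⟫ ^ 2 := by
  rw [map_add, LinearMap.add_apply, inner_add_right]
  congr 1
  simp only [EuclideanSpace.inner_eq_star_dotProduct, toLpLin_apply, vecMulVec_mulVec, star_trivial]
  simp [dotProduct_comm, sq]

end Matrix

/-- **Cauchy's interlacing theorem for rank-one updates.**
If `A` is a real symmetric `n × n` matrix and `v ∈ ℝⁿ`, then the eigenvalues of `A`
interlace the eigenvalues of `A + vvᵀ`: listing the eigenvalues of `A + vvᵀ` in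
decreasing order as `α 0 ≥ α 1 ≥ ...` and those of `A` as `β 0 ≥ β 1 ≥ ...`, we have
`α 0 ≥ β 0 ≥ α 1 ≥ β 1 ≥ ... ≥ β (n-1) ≥ α (n-1) ≥ β (n-1)`. -/
theorem rank_one_update_interlacing
    {n : ℕ} (A : Matrix (Fin n) (Fin n) ℝ) (v : Fin n → ℝ)
    (hA : A.IsHermitian)
    (hAv : (A + Matrix.vecMulVec v v).IsHermitian)
    (α β : Fin n → ℝ)
    (hα : Antitone α) (hβ : Antitone β)
    (hαeig : ∃ σ : Equiv.Perm (Fin n), α = hAv.eigenvalues ∘ σ)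
    (hβeig : ∃ τ : Equiv.Perm (Fin n), β = hA.eigenvalues ∘ τ) :
    (∀ i : Fin n, β i ≤ α i) ∧
      (∀ i : Fin n, ∀ h : (i : ℕ) + 1 < n, α ⟨(i : ℕ) + 1, h⟩ ≤ β i) := by
  obtain ⟨σ, rfl⟩ := hαeig
  obtain ⟨τ, rfl⟩ := hβeig
  have hAe := hA.toEuclideanLin_eigenvectorBasis_reindex τ
  have hAve := hAv.toEuclideanLin_eigenvectorBasis_reindex σ
  set u : EuclideanSpace ℝ (Fin n) := WithLp.toLp 2 v
  have hperp := finrank_le_finrank_orthogonal_span_singleton_add_one (𝕜 := ℝ) u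
  rw [finrank_euclideanSpace_fin] at hperp
  refine ⟨fun i => ?_, fun i hi => ?_⟩
  · refine eigenvalue_le_eigenvalue_of_inner_map_self_le hβ hα hAe hAve ⊤ (fun x _ => ?_)
      (by rw [finrank_top, finrank_euclideanSpace_fin]; omega)
    rw [inner_toEuclideanLin_add_vecMulVec_self]
    exact le_add_of_nonneg_right (sq_nonneg _)
  · refine eigenvalue_le_eigenvalue_of_inner_map_self_le hα hβ hAve hAe (ℝ ∙ u)ᗮ (fun x hx => ?_)
      (by rw [Fin.val_mk]; omega)
    rw [inner_toEuclideanLin_add_vecMulVec_self, mem_orthogonal_singleton_iff_inner_right.mp hx,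
      sq, mul_zero, add_zero]
end

section
/- Let A ∈ ℝⁿˣⁿ be a real symmetric matrix with nonnegative entries and at most one positive eigenvalue. Then for every v ∈ ℝⁿ with nonnegative entries and every real t ≥ 1, the matrix (vᵀAv)·A − t·(Av)(Av)ᵀ is negative semidefinite. -/
/-!
In an eigenbasis the quadratic form of `A` reads `λ x_k² - N(x)` with `N` positive semidefinite,
because at most one eigenvalue is positive. Such a form satisfies the reversed Cauchy–Schwarz
inequality `(xᵀAx)(yᵀAy) ≤ (xᵀAy)²` whenever `xᵀAx ≥ 0`. Entrywise nonnegativity gives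
`vᵀAv ≥ 0`, and the quadratic form of the matrix in question is
`(vᵀAv)(wᵀAw) - t (vᵀAw)² ≤ (1 - t)(vᵀAw)² ≤ 0`.
-/

open Matrix

lemma sub_mul_sub_le_sq_sub {c a b p q r : ℝ} (hc : 0 ≤ c) (hp : 0 ≤ p) (hq : 0 ≤ q)
    (hr : r ^ 2 ≤ p * q) (hpa : p ≤ c * a ^ 2) :
    (c * a ^ 2 - p) * (c * b ^ 2 - q) ≤ (c * (a * b) - r) ^ 2 := by
  rcases hp.eq_or_lt with rfl | hp
  · obtain rfl : r = 0 := by nlinarith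
    nlinarith [mul_nonneg hc (mul_nonneg (sq_nonneg a) hq)]
  · have hdiff : 0 ≤ p * ((c * (a * b) - r) ^ 2 - (c * a ^ 2 - p) * (c * b ^ 2 - q)) := by
      have : p * ((c * (a * b) - r) ^ 2 - (c * a ^ 2 - p) * (c * b ^ 2 - q))
          = c * (b * p - a * r) ^ 2 + (c * a ^ 2 - p) * (p * q - r ^ 2) := by ring
      rw [this]
      exact add_nonneg (by positivity) (mul_nonneg (sub_nonneg.2 hpa) (sub_nonneg.2 hr))
    exact sub_nonneg.1 ((mul_nonneg_iff_of_pos_left hp).1 hdiff)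

section

variable {ι : Type*} [Fintype ι] [DecidableEq ι]

theorem sum_mul_sum_le_sq_of_subsingleton_pos {d : ι → ℝ} (hd : {i | 0 < d i}.Subsingleton)
    {x y : ι → ℝ} (hx : 0 ≤ ∑ i, d i * x i ^ 2) :
    (∑ i, d i * x i ^ 2) * (∑ i, d i * y i ^ 2) ≤ (∑ i, d i * (x i * y i)) ^ 2 := by
  rcases hd.eq_empty_or_singleton with hempty | ⟨k, hk⟩
  · have hnonpos (i : ι) : d i ≤ 0 := by
      simpa using Set.eq_empty_iff_forall_notMem.1 hempty i
    have hxx : ∑ i, d i * x i ^ 2 = 0 := le_antisymm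
      (Finset.sum_nonpos fun i _ => mul_nonpos_of_nonpos_of_nonneg (hnonpos i) (sq_nonneg _)) hx
    rw [hxx, zero_mul]
    positivity
  · have hk_pos : 0 < d k := (hk ▸ Set.mem_singleton k : k ∈ {i | 0 < d i})
    set s := Finset.univ.erase k
    have hnonpos (i : ι) (hi : i ∈ s) : 0 ≤ -d i := by
      have hi' : i ∉ ({k} : Set ι) := Finset.ne_of_mem_erase hi
      rw [← hk] at hi'
      simpa using hi'
    have hsplit (f : ι → ℝ) : ∑ i, d i * f i = d k * f k - ∑ i ∈ s, -d i * f i := by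
      rw [← Finset.add_sum_erase _ _ (Finset.mem_univ k)]
      simp [s, Finset.sum_neg_distrib]
    have hweighted (f : ι → ℝ) : 0 ≤ ∑ i ∈ s, -d i * f i ^ 2 :=
      Finset.sum_nonneg fun i hi => mul_nonneg (hnonpos i hi) (sq_nonneg _)
    have hcs : (∑ i ∈ s, -d i * (x i * y i)) ^ 2 ≤
        (∑ i ∈ s, -d i * x i ^ 2) * ∑ i ∈ s, -d i * y i ^ 2 :=
      Finset.sum_sq_le_sum_mul_sum_of_sq_le_mul s
        (fun i hi => mul_nonneg (hnonpos i hi) (sq_nonneg _))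
        (fun i hi => mul_nonneg (hnonpos i hi) (sq_nonneg _)) fun i _ => le_of_eq (by ring)
    rw [hsplit] at hx
    rw [hsplit, hsplit, hsplit]
    exact sub_mul_sub_le_sq_sub hk_pos.le (hweighted x) (hweighted y) hcs (sub_nonneg.1 hx)

theorem Matrix.IsHermitian.dotProduct_mulVec_eq_sum_eigenvalues {A : Matrix ι ι ℝ}
    (hA : A.IsHermitian) (x y : ι → ℝ) :
    x ⬝ᵥ A *ᵥ y = ∑ i, hA.eigenvalues i *
      ((star (hA.eigenvectorUnitary : Matrix ι ι ℝ) *ᵥ x) i *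
        (star (hA.eigenvectorUnitary : Matrix ι ι ℝ) *ᵥ y) i) := by
  conv_lhs => rw [hA.spectral_theorem, Unitary.conjStarAlgAut_apply]
  rw [← mulVec_mulVec, ← mulVec_mulVec, dotProduct_mulVec, ← mulVec_transpose]
  simp [mulVec_diagonal, dotProduct, star_eq_conjTranspose, mul_left_comm]

theorem Matrix.IsHermitian.dotProduct_mulVec_mul_le_sq {A : Matrix ι ι ℝ} (hA : A.IsHermitian)
    (hpos : {i | 0 < hA.eigenvalues i}.Subsingleton) {x : ι → ℝ} (hx : 0 ≤ x ⬝ᵥ A *ᵥ x)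
    (y : ι → ℝ) :
    (x ⬝ᵥ A *ᵥ x) * (y ⬝ᵥ A *ᵥ y) ≤ (x ⬝ᵥ A *ᵥ y) ^ 2 := by
  simp only [hA.dotProduct_mulVec_eq_sum_eigenvalues, ← sq] at hx ⊢
  exact sum_mul_sum_le_sq_of_subsingleton_pos hpos hx

end

/-- If `A` is a real symmetric `n × n` matrix with nonnegative entries and at most one
positive eigenvalue, then for every nonnegative vector `v` and every `t ≥ 1`, the matrix
`(vᵀAv) • A - t • (Av)(Av)ᵀ` is negative semidefinite. -/
theorem nonneg_one_pos_eigenvalue_negSemidef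
    {n : ℕ} (A : Matrix (Fin n) (Fin n) ℝ) (hA : A.IsHermitian)
    (hnonneg : ∀ i j, 0 ≤ A i j)
    (hone : Fintype.card {i : Fin n // 0 < hA.eigenvalues i} ≤ 1)
    (v : Fin n → ℝ) (hv : ∀ i, 0 ≤ v i) (t : ℝ) (ht : 1 ≤ t) :
    ∀ w : Fin n → ℝ,
      w ⬝ᵥ ((v ⬝ᵥ A.mulVec v) • A - t • vecMulVec (A.mulVec v) (A.mulVec v)).mulVec w ≤ 0 := by
  intro w
  have hpos : {i | 0 < hA.eigenvalues i}.Subsingleton :=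
    Set.subsingleton_coe _ |>.1 (Fintype.card_le_one_iff_subsingleton.1 hone)
  have hvAv : 0 ≤ v ⬝ᵥ A *ᵥ v :=
    dotProduct_nonneg_of_nonneg hv fun i => dotProduct_nonneg_of_nonneg (hnonneg i) hv
  have hAv : A *ᵥ v ⬝ᵥ w = v ⬝ᵥ A *ᵥ w := by
    rw [dotProduct_mulVec, ← vecMul_transpose, (isHermitian_iff_isSymm.1 hA).eq]
  calc _ = (v ⬝ᵥ A *ᵥ v) * (w ⬝ᵥ A *ᵥ w) - t * (v ⬝ᵥ A *ᵥ w) ^ 2 := by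
        simp [sub_mulVec, smul_mulVec, vecMulVec_mulVec, hAv, dotProduct_comm w, sq]
    _ ≤ (v ⬝ᵥ A *ᵥ w) ^ 2 - 1 * (v ⬝ᵥ A *ᵥ w) ^ 2 := by
        gcongr
        exact hA.dotProduct_mulVec_mul_le_sq hpos hvAv w
    _ = 0 := by ring
end

section
/- Let A ∈ ℝⁿˣⁿ be symmetric with nonnegative entries and at most one positive eigenvalue, and let v, w ∈ ℝⁿ with v having positive entries and vᵀAv > 0. Then (vᵀAv)·(wᵀAw) ≤ (vᵀAw)². -/
/-!
If at most one eigenvalue of `A` is positive, the quadratic form `x ↦ xᵀAx` is nonpositive on the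
hyperplane where the eigencoordinate of that eigenvalue vanishes. For a symmetric bilinear form `B`
that is nonpositive on the kernel of a functional `f`, and `B v v > 0`, the vector
`f v • w - f w • v` lies in that kernel, and expanding `B x x ≤ 0` for it gives the reverse
Cauchy–Schwarz inequality `B v v * B w w ≤ (B v w)²`.
-/

open Matrix

namespace LinearMap.BilinForm.IsSymm

variable {𝕜 E : Type*} [Field 𝕜] [LinearOrder 𝕜] [IsStrictOrderedRing 𝕜]
  [AddCommGroup E] [Module 𝕜 E]

theorem mul_le_sq_of_nonpos_on_ker {B : LinearMap.BilinForm 𝕜 E} (hB : B.IsSymm)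
    {f : E →ₗ[𝕜] 𝕜} (hf : ∀ x, f x = 0 → B x x ≤ 0) {v : E} (hv : 0 < B v v) (w : E) :
    B v v * B w w ≤ B v w ^ 2 := by
  have hfv : f v ≠ 0 := fun h => (hf v h).not_gt hv
  have hx : B (f v • w - f w • v) (f v • w - f w • v) ≤ 0 :=
    hf _ (by simp only [map_sub, map_smul, smul_eq_mul]; ring)
  have hexp : B (f v • w - f w • v) (f v • w - f w • v) =
      f v ^ 2 * B w w - 2 * f v * f w * B v w + f w ^ 2 * B v v := by
    simp only [map_sub, map_smul, LinearMap.sub_apply, LinearMap.smul_apply, smul_eq_mul,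
      hB.eq w v]
    ring
  -- with `x = f v • w - f w • v`:
  -- `B v v · B x x = (f v)² (B v v · B w w - (B v w)²) + (f v · B v w - f w · B v v)²`
  have key : f v ^ 2 * (B v v * B w w - B v w ^ 2) ≤ 0 := by
    nlinarith [mul_nonpos_of_nonneg_of_nonpos hv.le (hexp ▸ hx),
      sq_nonneg (f v * B v w - f w * B v v)]
  exact sub_nonpos.mp (nonpos_of_mul_nonpos_right key (pow_two_pos_of_ne_zero hfv))

end LinearMap.BilinForm.IsSymm

namespace Matrix.IsHermitian

variable {ι : Type*} [Fintype ι] [DecidableEq ι] {A : Matrix ι ι ℝ} (hA : A.IsHermitian)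

theorem dotProduct_mulVec_eq_sum_eigenvalues_s4 (x z : ι → ℝ) :
    x ⬝ᵥ A *ᵥ z = ∑ i, hA.eigenvalues i * (x ᵥ* (hA.eigenvectorUnitary : Matrix ι ι ℝ)) i *
      (z ᵥ* (hA.eigenvectorUnitary : Matrix ι ι ℝ)) i := by
  conv_lhs => rw [hA.spectral_theorem, Unitary.conjStarAlgAut_apply]
  simp only [dotProduct_mulVec, RCLike.ofReal_real_eq_id, CompTriple.comp_eq]
  rw [← vecMul_vecMul, ← vecMul_vecMul, ← dotProduct_mulVec, star_eq_conjTranspose,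
    conjTranspose_eq_transpose_of_trivial, mulVec_transpose]
  simp [dotProduct, vecMul_diagonal, mul_comm, mul_assoc]

theorem dotProduct_mulVec_self_nonpos {x : ι → ℝ}
    (hx : ∀ i, 0 < hA.eigenvalues i → (x ᵥ* (hA.eigenvectorUnitary : Matrix ι ι ℝ)) i = 0) :
    x ⬝ᵥ A *ᵥ x ≤ 0 := by
  rw [hA.dotProduct_mulVec_eq_sum_eigenvalues_s4]
  refine Finset.sum_nonpos fun i _ => ?_
  rcases le_or_gt (hA.eigenvalues i) 0 with hi | hi
  · rw [mul_assoc]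
    exact mul_nonpos_of_nonpos_of_nonneg hi (mul_self_nonneg _)
  · simp [hx i hi]

theorem exists_dotProduct_mulVec_self_nonpos_on_ker
    (hone : Fintype.card {i // 0 < hA.eigenvalues i} ≤ 1) :
    ∃ f : (ι → ℝ) →ₗ[ℝ] ℝ, ∀ x, f x = 0 → x ⬝ᵥ A *ᵥ x ≤ 0 := by
  by_cases hpos : ∃ p, 0 < hA.eigenvalues p
  · obtain ⟨p, hp⟩ := hpos
    have hunique : ∀ i, 0 < hA.eigenvalues i → i = p := fun i hi =>
      congrArg Subtype.val (Fintype.card_le_one_iff_subsingleton.mp hone |>.elim ⟨i, hi⟩ ⟨p, hp⟩)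
    refine ⟨(LinearMap.proj p).comp (hA.eigenvectorUnitary : Matrix ι ι ℝ).vecMulLinear,
      fun x hx => hA.dotProduct_mulVec_self_nonpos fun i hi => ?_⟩
    rw [hunique i hi]
    exact hx
  · push Not at hpos
    exact ⟨0, fun x _ => hA.dotProduct_mulVec_self_nonpos fun i hi => absurd hi (hpos i).not_gt⟩

end Matrix.IsHermitian

theorem det_inequality_one_pos_eigenvalue_general
    {n : ℕ} (A : Matrix (Fin n) (Fin n) ℝ) (hA : A.IsHermitian)
    (hone : Fintype.card {i : Fin n // 0 < hA.eigenvalues i} ≤ 1)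
    (v w : Fin n → ℝ) (hvAv : 0 < v ⬝ᵥ A.mulVec v) :
    (v ⬝ᵥ A.mulVec v) * (w ⬝ᵥ A.mulVec w) ≤ (v ⬝ᵥ A.mulVec w) ^ 2 := by
  obtain ⟨f, hf⟩ := hA.exists_dotProduct_mulVec_self_nonpos_on_ker hone
  have hB : (toBilin' A).IsSymm := isSymm_toBilin'_iff_isSymm.mpr (isHermitian_iff_isSymm.mp hA)
  simp only [← toBilin'_apply'] at hf hvAv ⊢
  exact hB.mul_le_sq_of_nonpos_on_ker hf hvAv w

/-- If `A` is a real symmetric `n × n` matrix with nonnegative entries and at most one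
positive eigenvalue, and `v` has positive entries with `vᵀAv > 0`, then for every `w`,
`(vᵀAv)(wᵀAw) ≤ (vᵀAw)²`. -/
theorem det_inequality_one_pos_eigenvalue
    {n : ℕ} (A : Matrix (Fin n) (Fin n) ℝ) (hA : A.IsHermitian)
    (hnonneg : ∀ i j, 0 ≤ A i j)
    (hone : Fintype.card {i : Fin n // 0 < hA.eigenvalues i} ≤ 1)
    (v w : Fin n → ℝ) (hv : ∀ i, 0 < v i) (hvAv : 0 < v ⬝ᵥ A.mulVec v) :
    (v ⬝ᵥ A.mulVec v) * (w ⬝ᵥ A.mulVec w) ≤ (v ⬝ᵥ A.mulVec w) ^ 2 :=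
  det_inequality_one_pos_eigenvalue_general A hA hone v w hvAv
end

section
/- A polynomial g(y,z) = a + by + cz + dyz with nonnegative coefficients a, b, c, d is log-concave on the positive orthant if and only if 2bc ≥ ad. -/
/-!
Along a segment of the orthant, `g` restricts to a quadratic `φ` with `φ' = (b + dZ)u + (c + dY)v`
and `φ'' = 2duv`, where `(u, v)` is the direction and `(Y, Z)` the current point, and `log φ` is
concave as soon as `φ φ'' ≤ φ'²`. This is trivial when `uv ≤ 0`; when `uv > 0` it follows from
AM-GM and `d g(Y, Z) ≤ 2(b + dZ)(c + dY)`, which is exactly where `ad ≤ 2bc` enters.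

Conversely, log-concavity between the origin and `2t(u, v)` gives `a g(2tu, 2tv) ≤ g(tu, tv)²`;
dividing by `t²` and letting `t → 0` yields `2ad uv ≤ (bu + cv)²` for all `u, v ≥ 0`, which at
`(u, v) = (c, b)`, or with `u` or `v` large when `bc = 0`, forces `ad ≤ 2bc`.
-/

open Real Set Filter Topology

theorem concaveOn_log_of_mul_deriv2_le_sq {D : Set ℝ} (hD : Convex ℝ D) {f f' f'' : ℝ → ℝ}
    (hf : ContinuousOn f D) (hpos : ∀ x ∈ D, 0 < f x)
    (hf' : ∀ x ∈ interior D, HasDerivAt f (f' x) x)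
    (hf'' : ∀ x ∈ interior D, HasDerivAt f' (f'' x) x)
    (hle : ∀ x ∈ interior D, f x * f'' x ≤ f' x ^ 2) :
    ConcaveOn ℝ D (fun x ↦ log (f x)) := by
  have hpos' : ∀ x ∈ interior D, 0 < f x := fun x hx ↦ hpos x (interior_subset hx)
  refine concaveOn_of_hasDerivWithinAt2_nonpos hD (hf.log fun x hx ↦ (hpos x hx).ne')
    (f' := fun x ↦ f' x / f x) (f'' := fun x ↦ (f'' x * f x - f' x * f' x) / f x ^ 2)
    (fun x hx ↦ ((hf' x hx).log (hpos' x hx).ne').hasDerivWithinAt)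
    (fun x hx ↦ ((hf'' x hx).div (hf' x hx) (hpos' x hx).ne').hasDerivWithinAt) fun x hx ↦ ?_
  have := hle x hx
  exact div_nonpos_of_nonpos_of_nonneg (by nlinarith) (sq_nonneg _)

theorem rpow_mul_rpow_le_of_concaveOn_log {E : Type*} [AddCommMonoid E] [Module ℝ E] {s : Set E}
    {f : E → ℝ} (hf : ConcaveOn ℝ s (fun x ↦ log (f x))) (hpos : ∀ x ∈ s, 0 < f x) {x y : E}
    (hx : x ∈ s) (hy : y ∈ s) {l : ℝ} (hl₀ : 0 ≤ l) (hl₁ : l ≤ 1) :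
    f x ^ l * f y ^ (1 - l) ≤ f (l • x + (1 - l) • y) := by
  have hconc := hf.2 hx hy hl₀ (sub_nonneg.2 hl₁) (add_sub_cancel l 1)
  rw [smul_eq_mul, smul_eq_mul] at hconc
  calc f x ^ l * f y ^ (1 - l) = exp (l * log (f x) + (1 - l) * log (f y)) := by
        rw [rpow_def_of_pos (hpos x hx), rpow_def_of_pos (hpos y hy), ← exp_add, mul_comm l,
          mul_comm (1 - l)]
    _ ≤ exp (log (f (l • x + (1 - l) • y))) := exp_le_exp.2 hconc
    _ = f (l • x + (1 - l) • y) := exp_log (hpos _ (hf.1 hx hy hl₀ (sub_nonneg.2 hl₁) (by ring)))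

theorem mul_add_one_sub_mul_nonneg {p q t : ℝ} (hp : 0 ≤ p) (hq : 0 ≤ q) (ht₀ : 0 ≤ t)
    (ht₁ : t ≤ 1) : 0 ≤ t * p + (1 - t) * q :=
  add_nonneg (mul_nonneg ht₀ hp) (mul_nonneg (sub_nonneg.2 ht₁) hq)

def multiaffine (a b c d y z : ℝ) : ℝ := a + b * y + c * z + d * y * z

/-- Concavity of `log ∘ g` on the closed orthant, in multiplicative form so that it stays meaningful
where `g` vanishes. -/
def LogConcaveOnOrthant (g : ℝ → ℝ → ℝ) : Prop :=
  ∀ y₁ z₁ y₂ z₂ : ℝ, 0 ≤ y₁ → 0 ≤ z₁ → 0 ≤ y₂ → 0 ≤ z₂ → ∀ l : ℝ, 0 ≤ l → l ≤ 1 →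
    g y₁ z₁ ^ l * g y₂ z₂ ^ (1 - l) ≤ g (l * y₁ + (1 - l) * y₂) (l * z₁ + (1 - l) * z₂)

section multiaffine

variable {a b c d : ℝ}

theorem multiaffine_nonneg (ha : 0 ≤ a) (hb : 0 ≤ b) (hc : 0 ≤ c) (hd : 0 ≤ d) {y z : ℝ}
    (hy : 0 ≤ y) (hz : 0 ≤ z) : 0 ≤ multiaffine a b c d y z := by
  unfold multiaffine; positivity

theorem sq_mul_add_sq_mul_le_multiaffine (ha : 0 ≤ a) (hb : 0 ≤ b) (hc : 0 ≤ c) (hd : 0 ≤ d)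
    {y₁ z₁ y₂ z₂ : ℝ} (hy₁ : 0 ≤ y₁) (hz₁ : 0 ≤ z₁) (hy₂ : 0 ≤ y₂) (hz₂ : 0 ≤ z₂) {l : ℝ}
    (hl₀ : 0 ≤ l) (hl₁ : l ≤ 1) :
    l ^ 2 * multiaffine a b c d y₁ z₁ + (1 - l) ^ 2 * multiaffine a b c d y₂ z₂ ≤
      multiaffine a b c d (l * y₁ + (1 - l) * y₂) (l * z₁ + (1 - l) * z₂) := by
  have hm : 0 ≤ 1 - l := sub_nonneg.2 hl₁
  unfold multiaffine
  nlinarith [mul_nonneg ha (mul_nonneg hl₀ hm), mul_nonneg (mul_nonneg hb hy₁) (mul_nonneg hl₀ hm),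
    mul_nonneg (mul_nonneg hb hy₂) (mul_nonneg hl₀ hm),
    mul_nonneg (mul_nonneg hc hz₁) (mul_nonneg hl₀ hm),
    mul_nonneg (mul_nonneg hc hz₂) (mul_nonneg hl₀ hm),
    mul_nonneg (mul_nonneg hd (mul_nonneg hy₁ hz₂)) (mul_nonneg hl₀ hm),
    mul_nonneg (mul_nonneg hd (mul_nonneg hy₂ hz₁)) (mul_nonneg hl₀ hm)]

theorem multiaffine_combination_pos (ha : 0 ≤ a) (hb : 0 ≤ b) (hc : 0 ≤ c) (hd : 0 ≤ d)
    {y₁ z₁ y₂ z₂ : ℝ} (hy₁ : 0 ≤ y₁) (hz₁ : 0 ≤ z₁) (hy₂ : 0 ≤ y₂) (hz₂ : 0 ≤ z₂)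
    (h₁ : 0 < multiaffine a b c d y₁ z₁) (h₂ : 0 < multiaffine a b c d y₂ z₂) {l : ℝ}
    (hl₀ : 0 ≤ l) (hl₁ : l ≤ 1) :
    0 < multiaffine a b c d (l * y₁ + (1 - l) * y₂) (l * z₁ + (1 - l) * z₂) := by
  refine (sq_mul_add_sq_mul_le_multiaffine ha hb hc hd hy₁ hz₁ hy₂ hz₂ hl₀ hl₁).trans_lt' ?_
  rcases hl₀.eq_or_lt with rfl | hl₀
  · simpa using h₂
  · positivity

theorem HasDerivAt.multiaffine {Y Z : ℝ → ℝ} {Y' Z' t : ℝ} (hY : HasDerivAt Y Y' t)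
    (hZ : HasDerivAt Z Z' t) :
    HasDerivAt (fun s ↦ multiaffine a b c d (Y s) (Z s))
      ((b + d * Z t) * Y' + (c + d * Y t) * Z') t := by
  unfold _root_.multiaffine
  exact ((((hasDerivAt_const t a).add (hY.const_mul b)).add (hZ.const_mul c)).add
    ((hY.const_mul d).mul hZ)).congr_deriv (by ring)

theorem two_mul_mul_multiaffine_le_sq (ha : 0 ≤ a) (hb : 0 ≤ b) (hc : 0 ≤ c) (hd : 0 ≤ d)
    (h : a * d ≤ 2 * (b * c)) {y z : ℝ} (hy : 0 ≤ y) (hz : 0 ≤ z) (u v : ℝ) :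
    2 * d * (u * v) * multiaffine a b c d y z ≤ ((b + d * z) * u + (c + d * y) * v) ^ 2 := by
  rcases le_or_gt (u * v) 0 with huv | huv
  · have hduv : 2 * d * (u * v) ≤ 0 := mul_nonpos_of_nonneg_of_nonpos (by positivity) huv
    exact (mul_nonpos_of_nonpos_of_nonneg hduv (multiaffine_nonneg ha hb hc hd hy hz)).trans
      (sq_nonneg _)
  · have hdg : d * multiaffine a b c d y z ≤ 2 * ((b + d * z) * (c + d * y)) := by
      unfold multiaffine
      nlinarith [mul_nonneg (mul_nonneg hb hd) hy, mul_nonneg (mul_nonneg hc hd) hz,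
        mul_nonneg (mul_nonneg hd hd) (mul_nonneg hy hz)]
    nlinarith [sq_nonneg ((b + d * z) * u - (c + d * y) * v), mul_le_mul_of_nonneg_right hdg huv.le]

theorem concaveOn_log_multiaffine_segment (ha : 0 ≤ a) (hb : 0 ≤ b) (hc : 0 ≤ c) (hd : 0 ≤ d)
    (h : a * d ≤ 2 * (b * c)) {y₁ z₁ y₂ z₂ : ℝ} (hy₁ : 0 ≤ y₁) (hz₁ : 0 ≤ z₁) (hy₂ : 0 ≤ y₂)
    (hz₂ : 0 ≤ z₂) (h₁ : 0 < multiaffine a b c d y₁ z₁) (h₂ : 0 < multiaffine a b c d y₂ z₂) :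
    ConcaveOn ℝ (Icc 0 1)
      fun t ↦ log (multiaffine a b c d (t * y₁ + (1 - t) * y₂) (t * z₁ + (1 - t) * z₂)) := by
  have hsegment (p q t : ℝ) : HasDerivAt (fun s ↦ s * p + (1 - s) * q) (p - q) t :=
    (((hasDerivAt_id t).mul_const p).add
      (((hasDerivAt_const t 1).sub (hasDerivAt_id t)).mul_const q)).congr_deriv (by ring)
  refine concaveOn_log_of_mul_deriv2_le_sq (convex_Icc 0 1)
    (f' := fun t ↦ (b + d * (t * z₁ + (1 - t) * z₂)) * (y₁ - y₂) +
      (c + d * (t * y₁ + (1 - t) * y₂)) * (z₁ - z₂))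
    (f'' := fun _ ↦ 2 * d * ((y₁ - y₂) * (z₁ - z₂)))
    (fun t _ ↦ ((hsegment y₁ y₂ t).multiaffine (hsegment z₁ z₂ t)).continuousAt.continuousWithinAt)
    (fun t ⟨ht₀, ht₁⟩ ↦ multiaffine_combination_pos ha hb hc hd hy₁ hz₁ hy₂ hz₂ h₁ h₂ ht₀ ht₁)
    (fun t _ ↦ (hsegment y₁ y₂ t).multiaffine (hsegment z₁ z₂ t)) (fun t _ ↦ ?_) (fun t ht ↦ ?_)
  · exact ((((hsegment z₁ z₂ t).const_mul d).const_add b).mul_const (y₁ - y₂)).add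
      ((((hsegment y₁ y₂ t).const_mul d).const_add c).mul_const (z₁ - z₂)) |>.congr_deriv (by ring)
  · obtain ⟨ht₀, ht₁⟩ := interior_subset ht
    rw [mul_comm]
    exact two_mul_mul_multiaffine_le_sq ha hb hc hd h (mul_add_one_sub_mul_nonneg hy₁ hy₂ ht₀ ht₁)
      (mul_add_one_sub_mul_nonneg hz₁ hz₂ ht₀ ht₁) _ _

theorem logConcaveOnOrthant_multiaffine (ha : 0 ≤ a) (hb : 0 ≤ b) (hc : 0 ≤ c) (hd : 0 ≤ d)
    (h : a * d ≤ 2 * (b * c)) : LogConcaveOnOrthant (multiaffine a b c d) := by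
  intro y₁ z₁ y₂ z₂ hy₁ hz₁ hy₂ hz₂ l hl₀ hl₁
  have hg := multiaffine_nonneg ha hb hc hd (mul_add_one_sub_mul_nonneg hy₁ hy₂ hl₀ hl₁)
    (mul_add_one_sub_mul_nonneg hz₁ hz₂ hl₀ hl₁)
  rcases (multiaffine_nonneg ha hb hc hd hy₁ hz₁).eq_or_lt with h₁ | h₁
  · rcases hl₀.eq_or_lt with rfl | hl₀
    · simp
    · rwa [← h₁, zero_rpow hl₀.ne', zero_mul]
  rcases (multiaffine_nonneg ha hb hc hd hy₂ hz₂).eq_or_lt with h₂ | h₂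
  · rcases hl₁.eq_or_lt with rfl | hl₁
    · simp
    · rwa [← h₂, zero_rpow (sub_ne_zero.2 hl₁.ne'), mul_zero]
  simpa using rpow_mul_rpow_le_of_concaveOn_log
    (concaveOn_log_multiaffine_segment ha hb hc hd h hy₁ hz₁ hy₂ hz₂ h₁ h₂)
    (fun t ⟨ht₀, ht₁⟩ ↦ multiaffine_combination_pos ha hb hc hd hy₁ hz₁ hy₂ hz₂ h₁ h₂ ht₀ ht₁)
    (right_mem_Icc.2 zero_le_one) (left_mem_Icc.2 zero_le_one) hl₀ hl₁

theorem two_mul_mul_le_sq_of_logConcaveOnOrthant (ha : 0 ≤ a) (hb : 0 ≤ b) (hc : 0 ≤ c)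
    (hd : 0 ≤ d) (H : LogConcaveOnOrthant (multiaffine a b c d)) {u v : ℝ} (hu : 0 ≤ u)
    (hv : 0 ≤ v) : 2 * (a * d) * (u * v) ≤ (b * u + c * v) ^ 2 := by
  set p : ℝ → ℝ := fun t ↦ (b * u + c * v) ^ 2 - 2 * (a * d) * (u * v) +
    t * (2 * (b * u + c * v) * d * (u * v)) + t ^ 2 * (d * (u * v)) ^ 2
  have hsmall : ∀ t > 0, 0 ≤ p t := by
    intro t ht
    have hmid := H (2 * t * u) (2 * t * v) 0 0 (by positivity) (by positivity) le_rfl le_rfl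
      (1 / 2) (by norm_num) (by norm_num)
    have h₀ : multiaffine a b c d 0 0 = a := by simp [multiaffine]
    rw [h₀, show (1 : ℝ) - 1 / 2 = 1 / 2 by norm_num, ← mul_rpow (multiaffine_nonneg ha hb hc hd
      (by positivity) (by positivity)) ha, ← sqrt_eq_rpow, sqrt_le_iff] at hmid
    -- `g(t u, t v) ^ 2 - a g(2 t u, 2 t v) = t ^ 2 p t`
    refine (mul_nonneg_iff_of_pos_left (by positivity : 0 < t ^ 2)).1 ?_
    unfold multiaffine at hmid
    linear_combination hmid.2
  have hp₀ : 0 ≤ p 0 := ge_of_tendsto (((by fun_prop : Continuous p).tendsto 0).mono_left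
    (nhdsWithin_le_nhds (s := Ioi 0))) (eventually_nhdsWithin_of_forall hsmall)
  simpa [p] using hp₀

theorem mul_le_two_mul_of_forall_two_mul_mul_le_sq (hb : 0 ≤ b) (hc : 0 ≤ c)
    (h : ∀ u v : ℝ, 0 ≤ u → 0 ≤ v → 2 * (a * d) * (u * v) ≤ (b * u + c * v) ^ 2) :
    a * d ≤ 2 * (b * c) := by
  by_contra! hlt
  rcases (mul_nonneg hb hc).eq_or_lt with hbc | hbc
  · have had : 0 < a * d := by linarith
    rcases mul_eq_zero.1 hbc.symm with rfl | rfl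
    · have := h ((c ^ 2 + 1) / (a * d)) 1 (by positivity) zero_le_one
      nlinarith [mul_div_cancel₀ (c ^ 2 + 1) had.ne']
    · have := h 1 ((b ^ 2 + 1) / (a * d)) zero_le_one (by positivity)
      nlinarith [mul_div_cancel₀ (b ^ 2 + 1) had.ne']
  · nlinarith [h c b hc hb]

end multiaffine

/-- The bivariate multiaffine polynomial `g(y,z) = a + by + cz + dyz` with nonnegative
coefficients is log-concave on the positive orthant if and only if `2bc ≥ ad`. -/
theorem bivariate_logConcave_iff
    (a b c d : ℝ) (ha : 0 ≤ a) (hb : 0 ≤ b) (hc : 0 ≤ c) (hd : 0 ≤ d) :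
    (∀ y₁ z₁ y₂ z₂ : ℝ, 0 ≤ y₁ → 0 ≤ z₁ → 0 ≤ y₂ → 0 ≤ z₂ →
        ∀ l : ℝ, 0 ≤ l → l ≤ 1 →
          (a + b * y₁ + c * z₁ + d * y₁ * z₁) ^ l *
              (a + b * y₂ + c * z₂ + d * y₂ * z₂) ^ (1 - l) ≤
            a + b * (l * y₁ + (1 - l) * y₂) + c * (l * z₁ + (1 - l) * z₂) +
              d * (l * y₁ + (1 - l) * y₂) * (l * z₁ + (1 - l) * z₂)) ↔
      a * d ≤ 2 * (b * c) :=
  ⟨fun H ↦ mul_le_two_mul_of_forall_two_mul_mul_le_sq hb hc fun _ _ hu hv ↦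
      two_mul_mul_le_sq_of_logConcaveOnOrthant ha hb hc hd H hu hv,
    logConcaveOnOrthant_multiaffine ha hb hc hd⟩
end

section
/- Let g(y,z) = a + by + cz + dyz with a, b, c, d ≥ 0 and 2bc ≥ ad (i.e., g is log-concave). Then for any p ∈ [0,1], b + c ≥ φ(p) · inf_{y,z>0} g(y,z)/(y^p z^{1−p}), where φ(p) = p^p (1−p)^{1−p} / (1 + p(1−p)) (with the convention 0⁰ = 1). -/
set_option maxHeartbeats 1000000

private lemma two_mul_le_of_sq (a w : ℝ) (ha : 0 ≤ a) (hw : 0 ≤ w)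
    (h : 4 * a ^ 2 ≤ w ^ 2) : 2 * a ≤ w := by nlinarith


/-- For a log-concave bivariate multiaffine polynomial `g(y,z) = a + by + cz + dyz`
(nonnegative coefficients with `2bc ≥ ad`) and any `p ∈ [0,1]`,
`b + c ≥ φ(p) · inf_{y,z>0} g(y,z)/(yᵖ z^{1-p})`,
where `φ(p) = pᵖ (1-p)^{1-p} / (1 + p(1-p))` (with `0⁰ = 1`, as for `Real.rpow`). -/
theorem bivariate_capacity_lower_bound
    (a b c d : ℝ) (ha : 0 ≤ a) (hb : 0 ≤ b) (hc : 0 ≤ c) (hd : 0 ≤ d)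
    (hlc : a * d ≤ 2 * (b * c)) (p : ℝ) (hp0 : 0 ≤ p) (hp1 : p ≤ 1) :
    (p ^ p * (1 - p) ^ (1 - p) / (1 + p * (1 - p))) *
        sInf {x : ℝ | ∃ y z : ℝ, 0 < y ∧ 0 < z ∧
          x = (a + b * y + c * z + d * y * z) / (y ^ p * z ^ (1 - p))} ≤
      b + c := by
  have hSbd : BddBelow {x : ℝ | ∃ y z : ℝ, 0 < y ∧ 0 < z ∧
      x = (a + b * y + c * z + d * y * z) / (y ^ p * z ^ (1 - p))} := by
    refine ⟨0, fun x hx => ?_⟩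
    obtain ⟨y, z, hy, hz, rfl⟩ := hx
    have h1 : 0 ≤ a + b * y + c * z + d * y * z := by positivity
    have h2 : 0 < y ^ p * z ^ (1 - p) := by positivity
    exact div_nonneg h1 h2.le
  have hφ : 0 ≤ p ^ p * (1 - p) ^ (1 - p) / (1 + p * (1 - p)) := by
    have h1 : 0 ≤ p ^ p := Real.rpow_nonneg hp0 p
    have h2 : 0 ≤ (1 - p) ^ (1 - p) := Real.rpow_nonneg (by linarith) (1 - p)
    have h3 : 0 < 1 + p * (1 - p) := by nlinarith
    positivity
  apply le_of_forall_pos_le_add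
  intro ε hε
  rcases eq_or_lt_of_le hp0 with hp | hp0'
  · -- p = 0
    subst hp
    have hφ1 : ((0:ℝ) ^ (0:ℝ) * (1 - 0) ^ ((1:ℝ) - 0) / (1 + 0 * (1 - 0))) = 1 := by
      norm_num [Real.rpow_zero, Real.one_rpow]
    rw [hφ1, one_mul]
    obtain ⟨y, hy, hy2⟩ : ∃ y : ℝ, 0 < y ∧ d * y ≤ ε / 2 := by
      refine ⟨ε / (2 * (d + 1)), by positivity, ?_⟩
      rw [mul_div_assoc', div_le_div_iff₀ (by positivity) (by norm_num : (0:ℝ) < 2)]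
      nlinarith
    obtain ⟨z, hz, hz2⟩ : ∃ z : ℝ, 0 < z ∧ a + b * y ≤ ε / 2 * z := by
      refine ⟨(a + b * y) / (ε / 2) + 1, by positivity, ?_⟩
      have h : ε / 2 * ((a + b * y) / (ε / 2)) = a + b * y :=
        mul_div_cancel₀ _ (by positivity)
      rw [mul_add, h]
      nlinarith
    have hx : (a + b * y + c * z + d * y * z) / (y ^ (0:ℝ) * z ^ ((1:ℝ) - 0)) ∈
        {x : ℝ | ∃ y z : ℝ, 0 < y ∧ 0 < z ∧
          x = (a + b * y + c * z + d * y * z) / (y ^ (0:ℝ) * z ^ ((1:ℝ) - 0))} :=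
      ⟨y, z, hy, hz, rfl⟩
    refine le_trans (csInf_le hSbd hx) ?_
    have hden : y ^ (0:ℝ) * z ^ ((1:ℝ) - 0) = z := by
      norm_num [Real.rpow_zero, Real.rpow_one]
    rw [hden, div_le_iff₀ hz]
    nlinarith [mul_le_mul_of_nonneg_right hy2 hz.le, mul_nonneg hb hz.le]
  rcases eq_or_lt_of_le hp1 with hp | hp1'
  · -- p = 1
    subst hp
    have hφ1 : ((1:ℝ) ^ (1:ℝ) * (1 - 1) ^ ((1:ℝ) - 1) / (1 + 1 * (1 - 1))) = 1 := by
      norm_num [Real.rpow_zero, Real.one_rpow]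
    rw [hφ1, one_mul]
    obtain ⟨z, hz, hz2⟩ : ∃ z : ℝ, 0 < z ∧ d * z ≤ ε / 2 := by
      refine ⟨ε / (2 * (d + 1)), by positivity, ?_⟩
      rw [mul_div_assoc', div_le_div_iff₀ (by positivity) (by norm_num : (0:ℝ) < 2)]
      nlinarith
    obtain ⟨y, hy, hy2⟩ : ∃ y : ℝ, 0 < y ∧ a + c * z ≤ ε / 2 * y := by
      refine ⟨(a + c * z) / (ε / 2) + 1, by positivity, ?_⟩
      have h : ε / 2 * ((a + c * z) / (ε / 2)) = a + c * z :=
        mul_div_cancel₀ _ (by positivity)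
      rw [mul_add, h]
      nlinarith
    have hx : (a + b * y + c * z + d * y * z) / (y ^ (1:ℝ) * z ^ ((1:ℝ) - 1)) ∈
        {x : ℝ | ∃ y z : ℝ, 0 < y ∧ 0 < z ∧
          x = (a + b * y + c * z + d * y * z) / (y ^ (1:ℝ) * z ^ ((1:ℝ) - 1))} :=
      ⟨y, z, hy, hz, rfl⟩
    refine le_trans (csInf_le hSbd hx) ?_
    have hden : y ^ (1:ℝ) * z ^ ((1:ℝ) - 1) = y := by
      norm_num [Real.rpow_zero, Real.rpow_one]
    rw [hden, div_le_iff₀ hy]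
    nlinarith [mul_le_mul_of_nonneg_right hz2 hy.le, mul_nonneg hc hy.le]
  · -- 0 < p < 1
    have h1p : 0 < 1 - p := by linarith
    have hq : 0 < p * (1 - p) := mul_pos hp0' h1p
    have hR : 0 ≤ b * (1 - p ^ 2) + c * p * (2 - p) := by nlinarith
    -- choose a good scale l
    obtain ⟨l, hl, hsum⟩ : ∃ l : ℝ, 0 < l ∧
        a + d * l ^ 2 * (p * (1 - p)) ≤
          (b * (1 - p ^ 2) + c * p * (2 - p) + ε) * l := by
      rcases eq_or_lt_of_le ha with hA | hA
      · -- a = 0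
        obtain ⟨l, hl, key⟩ : ∃ l : ℝ, 0 < l ∧ d * l * (p * (1 - p)) ≤ ε := by
          refine ⟨ε / (d * (p * (1 - p)) + 1), by positivity, ?_⟩
          rw [mul_div_assoc', div_mul_eq_mul_div,
            div_le_iff₀ (by positivity)]
          nlinarith
        refine ⟨l, hl, ?_⟩
        rw [← hA]
        nlinarith [mul_le_mul_of_nonneg_right key hl.le, mul_nonneg hR hl.le]
      rcases eq_or_lt_of_le hd with hD | hD
      · -- d = 0
        refine ⟨(a + 1) / ε, by positivity, ?_⟩
        rw [← hD]
        have hl : (0:ℝ) < (a + 1) / ε := by positivity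
        have h : ε * ((a + 1) / ε) = a + 1 := by field_simp
        nlinarith [mul_nonneg hR hl.le]
      · -- a > 0, d > 0
        obtain ⟨l, hl, hl2⟩ : ∃ l : ℝ, 0 < l ∧ l ^ 2 = a / (d * (p * (1 - p))) :=
          ⟨Real.sqrt (a / (d * (p * (1 - p)))),
            Real.sqrt_pos.mpr (by positivity), Real.sq_sqrt (by positivity)⟩
        refine ⟨l, hl, ?_⟩
        have hdq : 0 < d * (p * (1 - p)) := by positivity
        have hdl : d * l ^ 2 * (p * (1 - p)) = a := by
          rw [hl2]; field_simp
        have hR2 : 4 * (a * d * (p * (1 - p))) ≤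
            (b * (1 - p ^ 2) + c * p * (2 - p)) ^ 2 := by
          have h1 : a * d * (p * (1 - p)) ≤ 2 * (b * c) * (p * (1 - p)) :=
            mul_le_mul_of_nonneg_right hlc hq.le
          nlinarith [sq_nonneg (b * (1 - p ^ 2) - c * p * (2 - p)),
            mul_nonneg (mul_nonneg (mul_nonneg hb hc) hq.le) hq.le]
        have hRl : 2 * a ≤ (b * (1 - p ^ 2) + c * p * (2 - p)) * l := by
          have h2 : 4 * a ^ 2 ≤ ((b * (1 - p ^ 2) + c * p * (2 - p)) * l) ^ 2 := by
            have h1 : ((b * (1 - p ^ 2) + c * p * (2 - p)) * l) ^ 2 =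
                (b * (1 - p ^ 2) + c * p * (2 - p)) ^ 2 * l ^ 2 := by ring
            rw [h1, hl2, ← mul_div_assoc, le_div_iff₀ hdq]
            linarith [mul_le_mul_of_nonneg_right hR2 hA.le]
          exact two_mul_le_of_sq a _ hA.le (mul_nonneg hR hl.le) h2
        linarith [mul_nonneg hε.le hl.le]
    -- now use the point (l*p, l*(1-p))
    have hy : 0 < l * p := mul_pos hl hp0'
    have hz : 0 < l * (1 - p) := mul_pos hl h1p
    have hx : (a + b * (l * p) + c * (l * (1 - p)) + d * (l * p) * (l * (1 - p))) /
        ((l * p) ^ p * (l * (1 - p)) ^ (1 - p)) ∈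
        {x : ℝ | ∃ y z : ℝ, 0 < y ∧ 0 < z ∧
          x = (a + b * y + c * z + d * y * z) / (y ^ p * z ^ (1 - p))} :=
      ⟨l * p, l * (1 - p), hy, hz, rfl⟩
    have hden : (l * p) ^ p * (l * (1 - p)) ^ (1 - p) =
        l * (p ^ p * (1 - p) ^ (1 - p)) := by
      rw [Real.mul_rpow hl.le hp0, Real.mul_rpow hl.le h1p.le]
      rw [show l ^ p * p ^ p * (l ^ (1 - p) * (1 - p) ^ (1 - p)) =
          l ^ p * l ^ (1 - p) * (p ^ p * (1 - p) ^ (1 - p)) by ring]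
      rw [← Real.rpow_add hl, add_sub_cancel, Real.rpow_one]
    have hP : 0 < p ^ p * (1 - p) ^ (1 - p) :=
      mul_pos (Real.rpow_pos_of_pos hp0' p) (Real.rpow_pos_of_pos h1p (1 - p))
    have h1q : 0 < 1 + p * (1 - p) := by linarith
    refine le_trans (mul_le_mul_of_nonneg_left (csInf_le hSbd hx) hφ) ?_
    rw [hden]
    have heq : p ^ p * (1 - p) ^ (1 - p) / (1 + p * (1 - p)) *
        ((a + b * (l * p) + c * (l * (1 - p)) + d * (l * p) * (l * (1 - p))) /
          (l * (p ^ p * (1 - p) ^ (1 - p)))) =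
        (a + b * (l * p) + c * (l * (1 - p)) + d * (l * p) * (l * (1 - p))) /
          (l * (1 + p * (1 - p))) := by
      field_simp
    rw [heq, div_le_iff₀ (by positivity)]
    nlinarith [mul_nonneg (mul_nonneg hε.le hl.le) hq.le]
end

section
/- Let μ be an r-homogeneous probability distribution on subsets of [n] (i.e., μ is supported on sets of size exactly r) with a log-concave generating polynomial and marginals μ₁,...,μₙ. Then Σᵢ H(μᵢ) − r ≤ H(μ) ≤ Σᵢ H(μᵢ), where H(p) = p log(1/p) + (1−p) log(1/(1−p)). -/
/-- The Shannon entropy of a distribution on subsets of `[n]`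
(with the convention `0 · log (1/0) = 0`, automatic since `Real.log 0 = 0`). -/
noncomputable def setEntropy {n : ℕ} (μ : Finset (Fin n) → ℝ) : ℝ :=
  ∑ S : Finset (Fin n), μ S * Real.log (1 / μ S)

/-- The marginal probability `μᵢ = P_{S∼μ}[i ∈ S]`. -/
noncomputable def marginal {n : ℕ} (μ : Finset (Fin n) → ℝ) (i : Fin n) : ℝ :=
  ∑ S : Finset (Fin n), if i ∈ S then μ S else 0

/-- Binary entropy `H(p) = p log(1/p) + (1-p) log(1/(1-p))`. -/
noncomputable def binEntropy (p : ℝ) : ℝ :=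
  p * Real.log (1 / p) + (1 - p) * Real.log (1 / (1 - p))

/-- The multiaffine generating polynomial of `μ`, as a function. -/
noncomputable def genFun {n : ℕ} (μ : Finset (Fin n) → ℝ) (z : Fin n → ℝ) : ℝ :=
  ∑ S : Finset (Fin n), μ S * ∏ i ∈ S, z i

/-!
Upper bound: Gibbs' inequality compares `μ` with the product of independent Bernoulli(`μᵢ`)
distributions, whose cross-entropy with `μ` is exactly `∑ᵢ H(μᵢ)`.

Lower bound: `g = genFun μ` is log-concave with `g 1 = 1` and gradient `(μᵢ)ᵢ` at `1`, so its
tangent plane there gives `g z ≤ exp ∑ᵢ μᵢ (zᵢ - 1)` on the orthant. Taking `zᵢ = 1/μᵢ` on `S`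
and `0` off `S`, the exponent is `|S| - r = 0`, whence `μ S ≤ ∏_{i ∈ S} μᵢ`. This negative
correlation gives `H(μ) ≥ ∑ᵢ μᵢ log(1/μᵢ)`, and `(1-p) log(1/(1-p)) ≤ p` together with
`∑ᵢ μᵢ = r` finishes.
-/

open Finset Filter Topology

section Marginal

variable {n : ℕ} {μ : Finset (Fin n) → ℝ}

lemma marginal_eq_sum_filter (μ : Finset (Fin n) → ℝ) (i : Fin n) :
    marginal μ i = ∑ S with i ∈ S, μ S :=
  (sum_filter _ _).symm

lemma one_sub_marginal (hsum : ∑ S, μ S = 1) (i : Fin n) :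
    1 - marginal μ i = ∑ S with i ∉ S, μ S := by
  rw [marginal_eq_sum_filter, ← hsum, ← sum_filter_add_sum_filter_not univ (i ∈ ·)]
  ring

lemma marginal_nonneg (hnn : ∀ S, 0 ≤ μ S) (i : Fin n) : 0 ≤ marginal μ i := by
  rw [marginal_eq_sum_filter]
  exact sum_nonneg fun S _ => hnn S

lemma marginal_le_one (hnn : ∀ S, 0 ≤ μ S) (hsum : ∑ S, μ S = 1) (i : Fin n) :
    marginal μ i ≤ 1 := by
  have := one_sub_marginal hsum i ▸ sum_nonneg fun S _ => hnn S
  linarith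

lemma le_marginal (hnn : ∀ S, 0 ≤ μ S) {i : Fin n} {S : Finset (Fin n)} (hi : i ∈ S) :
    μ S ≤ marginal μ i := by
  rw [marginal_eq_sum_filter]
  exact single_le_sum (fun T _ => hnn T) (mem_filter.2 ⟨mem_univ S, hi⟩)

lemma le_one_sub_marginal (hnn : ∀ S, 0 ≤ μ S) (hsum : ∑ S, μ S = 1) {i : Fin n}
    {S : Finset (Fin n)} (hi : i ∉ S) : μ S ≤ 1 - marginal μ i := by
  rw [one_sub_marginal hsum]
  exact single_le_sum (fun T _ => hnn T) (mem_filter.2 ⟨mem_univ S, hi⟩)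

lemma sum_marginal_mul (μ : Finset (Fin n) → ℝ) (c : Fin n → ℝ) :
    ∑ i, marginal μ i * c i = ∑ S, μ S * ∑ i ∈ S, c i := by
  simp only [marginal, sum_mul, mul_sum, ite_mul, zero_mul]
  rw [sum_comm]
  exact sum_congr rfl fun S _ => by rw [← sum_filter, filter_mem_eq_inter, univ_inter]

lemma sum_one_sub_marginal_mul (hsum : ∑ S, μ S = 1) (c : Fin n → ℝ) :
    ∑ i, (1 - marginal μ i) * c i = ∑ S, μ S * ∑ i ∈ Sᶜ, c i := by
  have hcompl (S : Finset (Fin n)) : ∑ i ∈ Sᶜ, c i = ∑ i, c i - ∑ i ∈ S, c i := by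
    rw [← sum_add_sum_compl S c]; ring
  simp only [sub_mul, one_mul, sum_sub_distrib, sum_marginal_mul, hcompl, mul_sub,
    ← sum_mul, hsum, one_mul]

lemma sum_marginal {r : ℕ} (hsum : ∑ S, μ S = 1) (hhom : ∀ S, μ S ≠ 0 → S.card = r) :
    ∑ i, marginal μ i = r := by
  have hcard (S : Finset (Fin n)) : μ S * #S = μ S * r := by
    by_cases h0 : μ S = 0
    · simp [h0]
    · rw [hhom S h0]
  simpa [hcard, ← sum_mul, hsum] using sum_marginal_mul μ fun _ => (1 : ℝ)

end Marginal

theorem sum_mul_log_one_div_le_of_sum_le {α : Type*} [Fintype α] {p q : α → ℝ}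
    (hp : ∀ x, 0 ≤ p x) (hq : ∀ x, 0 ≤ q x) (hpq : ∀ x, p x ≠ 0 → q x ≠ 0)
    (hsum : ∑ x, q x ≤ ∑ x, p x) :
    ∑ x, p x * Real.log (1 / p x) ≤ ∑ x, p x * Real.log (1 / q x) := by
  have hterm (x : α) : p x * Real.log (1 / p x) - p x * Real.log (1 / q x) ≤ q x - p x := by
    rcases (hp x).eq_or_lt with h0 | hpos
    · simp [← h0, hq x]
    have hqpos : 0 < q x := (hq x).lt_of_ne' (hpq x hpos.ne')
    calc p x * Real.log (1 / p x) - p x * Real.log (1 / q x)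
        = p x * Real.log (q x / p x) := by
          rw [Real.log_div hqpos.ne' hpos.ne', one_div, one_div, Real.log_inv, Real.log_inv]
          ring
      _ ≤ p x * (q x / p x - 1) :=
          mul_le_mul_of_nonneg_left (Real.log_le_sub_one_of_pos (div_pos hqpos hpos)) hpos.le
      _ = q x - p x := by field_simp
  have := sum_le_sum fun x (_ : x ∈ univ) => hterm x
  simp only [sum_sub_distrib] at this
  linarith

section Entropy

variable {n : ℕ} {μ : Finset (Fin n) → ℝ}

def bernoulliProd (p : Fin n → ℝ) (S : Finset (Fin n)) : ℝ :=
  (∏ i ∈ S, p i) * ∏ i ∈ Sᶜ, (1 - p i)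

lemma sum_bernoulliProd (p : Fin n → ℝ) : ∑ S, bernoulliProd p S = 1 := by
  simpa [bernoulliProd, compl_eq_univ_sdiff] using (prod_add p (fun i => 1 - p i) univ).symm

lemma bernoulliProd_nonneg {p : Fin n → ℝ} (h0 : ∀ i, 0 ≤ p i) (h1 : ∀ i, p i ≤ 1)
    (S : Finset (Fin n)) : 0 ≤ bernoulliProd p S :=
  mul_nonneg (prod_nonneg fun i _ => h0 i) (prod_nonneg fun i _ => sub_nonneg.2 (h1 i))

lemma bernoulliProd_marginal_pos (hnn : ∀ S, 0 ≤ μ S) (hsum : ∑ S, μ S = 1)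
    {S : Finset (Fin n)} (hS : 0 < μ S) : 0 < bernoulliProd (marginal μ) S :=
  mul_pos (prod_pos fun _ hi => hS.trans_le (le_marginal hnn hi))
    (prod_pos fun _ hi => hS.trans_le (le_one_sub_marginal hnn hsum (mem_compl.1 hi)))

lemma sum_mul_log_one_div_bernoulliProd_marginal (hnn : ∀ S, 0 ≤ μ S)
    (hsum : ∑ S, μ S = 1) :
    ∑ S, μ S * Real.log (1 / bernoulliProd (marginal μ) S) =
      ∑ i, binEntropy (marginal μ i) := by
  simp only [binEntropy, sum_add_distrib]
  rw [sum_marginal_mul, sum_one_sub_marginal_mul hsum, ← sum_add_distrib]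
  refine sum_congr rfl fun S _ => ?_
  rw [← mul_add]
  rcases (hnn S).eq_or_lt with h0 | hS
  · simp [← h0]
  congr 1
  have hm (i) (hi : i ∈ S) : marginal μ i ≠ 0 := (hS.trans_le (le_marginal hnn hi)).ne'
  have hm' (i) (hi : i ∈ Sᶜ) : 1 - marginal μ i ≠ 0 :=
    (hS.trans_le (le_one_sub_marginal hnn hsum (mem_compl.1 hi))).ne'
  rw [bernoulliProd, Real.log_div one_ne_zero (mul_ne_zero (prod_ne_zero_iff.2 hm)
    (prod_ne_zero_iff.2 hm')), Real.log_mul (prod_ne_zero_iff.2 hm) (prod_ne_zero_iff.2 hm'),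
    Real.log_prod hm, Real.log_prod hm']
  simp only [one_div, Real.log_inv, Real.log_one, sum_neg_distrib]
  ring

theorem setEntropy_le_sum_binEntropy_marginal (hnn : ∀ S, 0 ≤ μ S) (hsum : ∑ S, μ S = 1) :
    setEntropy μ ≤ ∑ i, binEntropy (marginal μ i) := by
  rw [← sum_mul_log_one_div_bernoulliProd_marginal hnn hsum]
  refine sum_mul_log_one_div_le_of_sum_le hnn
    (bernoulliProd_nonneg (marginal_nonneg hnn) (marginal_le_one hnn hsum))
    (fun S hS => (bernoulliProd_marginal_pos hnn hsum ((hnn S).lt_of_ne' hS)).ne') ?_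
  rw [sum_bernoulliProd, hsum]

lemma binEntropy_le {p : ℝ} (hp : p ≤ 1) : binEntropy p ≤ p * Real.log (1 / p) + p := by
  have := Real.negMulLog_le_one_sub_self (sub_nonneg.2 hp)
  rw [Real.negMulLog, sub_sub_cancel] at this
  rw [binEntropy, one_div (1 - p), Real.log_inv]
  linarith

theorem sum_mul_log_marginal_le_setEntropy (hnn : ∀ S, 0 ≤ μ S)
    (hneg : ∀ S, μ S ≤ ∏ i ∈ S, marginal μ i) :
    ∑ i, marginal μ i * Real.log (1 / marginal μ i) ≤ setEntropy μ := by
  rw [sum_marginal_mul, setEntropy]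
  refine sum_le_sum fun S _ => ?_
  rcases (hnn S).eq_or_lt with h0 | hS
  · simp [← h0]
  refine mul_le_mul_of_nonneg_left ?_ hS.le
  have hm (i) (hi : i ∈ S) : marginal μ i ≠ 0 := (hS.trans_le (le_marginal hnn hi)).ne'
  simp only [one_div, Real.log_inv, sum_neg_distrib, ← Real.log_prod hm, neg_le_neg_iff]
  exact Real.log_le_log hS (hneg S)

end Entropy

lemma le_of_hasDerivAt_of_le_slope {f : ℝ → ℝ} {a f' x : ℝ} (hf : HasDerivAt f f' x)
    (h : ∀ᶠ t in 𝓝[>] x, a ≤ slope f x t) : a ≤ f' :=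
  ge_of_tendsto ((hasDerivAt_iff_tendsto_slope.1 hf).mono_left (nhdsGT_le_nhdsNE x)) h

section LogConcave

variable {n : ℕ} {μ : Finset (Fin n) → ℝ}

def GenFunLogConcave (μ : Finset (Fin n) → ℝ) : Prop :=
  ∀ v w : Fin n → ℝ, (∀ i, 0 ≤ v i) → (∀ i, 0 ≤ w i) →
    ∀ l : ℝ, 0 ≤ l → l ≤ 1 →
      (genFun μ v) ^ l * (genFun μ w) ^ (1 - l) ≤ genFun μ (l • v + (1 - l) • w)

lemma hasDerivAt_genFun_one_add_mul (μ : Finset (Fin n) → ℝ) (w : Fin n → ℝ) :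
    HasDerivAt (fun t => genFun μ fun i => 1 + t * w i) (∑ i, marginal μ i * w i) 0 := by
  rw [sum_marginal_mul]
  refine HasDerivAt.fun_sum fun S _ => ?_
  have hprod := HasDerivAt.fun_finsetProd (u := S) fun i _ =>
    ((hasDerivAt_id (0 : ℝ)).mul_const (w i)).const_add 1
  simpa using hprod.const_mul (μ S)

theorem genFun_le_exp_sum_marginal_mul (hsum : ∑ S, μ S = 1) (hlc : GenFunLogConcave μ)
    {z : Fin n → ℝ} (hz : ∀ i, 0 ≤ z i) :
    genFun μ z ≤ Real.exp (∑ i, marginal μ i * (z i - 1)) := by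
  rcases le_or_gt (genFun μ z) 0 with hg | hg
  · exact hg.trans (Real.exp_pos _).le
  rw [← Real.log_le_iff_le_exp hg]
  set h : ℝ → ℝ := fun t => genFun μ fun i => 1 + t * (z i - 1) with h_def
  have h0 : h 0 = 1 := by simp [h_def, genFun, hsum]
  refine le_of_hasDerivAt_of_le_slope (hasDerivAt_genFun_one_add_mul μ _) ?_
  filter_upwards [Ioc_mem_nhdsGT (zero_lt_one' ℝ)] with t ⟨ht0, ht1⟩
  have hpow : genFun μ z ^ t ≤ h t := by
    have hline : t • z + (1 - t) • (1 : Fin n → ℝ) = fun i => 1 + t * (z i - 1) := by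
      ext i
      simp only [Pi.add_apply, Pi.smul_apply, Pi.one_apply, smul_eq_mul]
      ring
    have := hlc z 1 hz (fun _ => zero_le_one) t ht0.le ht1
    rwa [show genFun μ 1 = 1 by simp [genFun, hsum], Real.one_rpow, mul_one, hline] at this
  have hpos : 0 < genFun μ z ^ t := Real.rpow_pos_of_pos hg t
  have hlog : t * Real.log (genFun μ z) ≤ h t - h 0 := calc
    t * Real.log (genFun μ z) = Real.log (genFun μ z ^ t) := (Real.log_rpow hg t).symm
    _ ≤ Real.log (h t) := Real.log_le_log hpos hpow
    _ ≤ h t - h 0 := h0 ▸ Real.log_le_sub_one_of_pos (hpos.trans_le hpow)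
  rwa [slope_def_field, sub_zero, le_div_iff₀ ht0, mul_comm]

theorem le_prod_marginal {r : ℕ} (hnn : ∀ S, 0 ≤ μ S) (hsum : ∑ S, μ S = 1)
    (hhom : ∀ S, μ S ≠ 0 → S.card = r) (hlc : GenFunLogConcave μ) (S : Finset (Fin n)) :
    μ S ≤ ∏ i ∈ S, marginal μ i := by
  rcases (hnn S).eq_or_lt with h0 | hS
  · exact h0 ▸ prod_nonneg fun i _ => marginal_nonneg hnn i
  have hm (i) (hi : i ∈ S) : 0 < marginal μ i := hS.trans_le (le_marginal hnn hi)
  set z : Fin n → ℝ := fun i => if i ∈ S then (marginal μ i)⁻¹ else 0 with hz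
  have hz0 (i : Fin n) : 0 ≤ z i := by
    simp only [hz]
    split_ifs with hi
    exacts [(inv_pos.2 (hm i hi)).le, le_rfl]
  have hexp : ∑ i, marginal μ i * (z i - 1) = 0 := by
    have hmz (i : Fin n) : marginal μ i * z i = if i ∈ S then 1 else 0 := by
      by_cases hi : i ∈ S
      · simp [hz, hi, (hm i hi).ne']
      · simp [hz, hi]
    simp only [mul_sub, mul_one, sum_sub_distrib, hmz, sum_boole, sum_marginal hsum hhom,
      filter_mem_eq_inter, univ_inter, hhom S hS.ne', sub_self]
  have hterm : μ S * ∏ i ∈ S, z i ≤ genFun μ z :=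
    single_le_sum (f := fun T => μ T * ∏ i ∈ T, z i)
      (fun T _ => mul_nonneg (hnn T) (prod_nonneg fun i _ => hz0 i)) (mem_univ S)
  have hprod : ∏ i ∈ S, z i = (∏ i ∈ S, marginal μ i)⁻¹ := by
    rw [← prod_inv_distrib]
    exact prod_congr rfl fun i hi => by simp [hz, hi]
  have := hterm.trans (genFun_le_exp_sum_marginal_mul hsum hlc hz0)
  rwa [hexp, Real.exp_zero, hprod, ← div_eq_mul_inv, div_le_one (prod_pos hm)] at this

end LogConcave

/-- For an `r`-homogeneous probability distribution `μ` on subsets of `[n]` with a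
log-concave generating polynomial, `∑ᵢ H(μᵢ) − r ≤ H(μ) ≤ ∑ᵢ H(μᵢ)`. -/
theorem setEntropy_additive_approx
    {n r : ℕ} (μ : Finset (Fin n) → ℝ)
    (hnn : ∀ S, 0 ≤ μ S) (hsum : ∑ S : Finset (Fin n), μ S = 1)
    (hhom : ∀ S, μ S ≠ 0 → S.card = r)
    (hlc : ∀ v w : Fin n → ℝ, (∀ i, 0 ≤ v i) → (∀ i, 0 ≤ w i) →
      ∀ l : ℝ, 0 ≤ l → l ≤ 1 →
        (genFun μ v) ^ l * (genFun μ w) ^ (1 - l) ≤ genFun μ (l • v + (1 - l) • w)) :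
    (∑ i : Fin n, binEntropy (marginal μ i)) - r ≤ setEntropy μ ∧
      setEntropy μ ≤ ∑ i : Fin n, binEntropy (marginal μ i) := by
  refine ⟨?_, setEntropy_le_sum_binEntropy_marginal hnn hsum⟩
  calc (∑ i, binEntropy (marginal μ i)) - r
      ≤ ∑ i, (marginal μ i * Real.log (1 / marginal μ i) + marginal μ i) -
          ∑ i, marginal μ i := by
        rw [sum_marginal hsum hhom]
        gcongr with i
        exact binEntropy_le (marginal_le_one hnn hsum i)
    _ = ∑ i, marginal μ i * Real.log (1 / marginal μ i) := by
        rw [sum_add_distrib, add_sub_cancel_right]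
    _ ≤ setEntropy μ :=
        sum_mul_log_marginal_le_setEntropy hnn (le_prod_marginal hnn hsum hhom hlc)
end
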